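/- Let q > 5 be a prime such that p = 2q + 1 is prime and z(p) divides π(q). Then (5/q) = -1 and π(q) divides 2(q + 1). -/

import Mathlib

/-- Rank of apparition: least `k ≥ 1` with `p ∣ fib k`. -/
noncomputable def fibRank (p : ℕ) : ℕ := sInf {k | 0 < k ∧ p ∣ Nat.fib k}

/-- Pisano period: least `k ≥ 1` with `fib (n + k) ≡ fib n [MOD q]` for all `n`. -/
noncomputable def pisano (q : ℕ) : ℕ :=
  sInf {k | 0 < k ∧ ∀ n, Nat.fib (n + k) ≡ Nat.fib n [MOD q]}

namespace FibGold

open Polynomial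

noncomputable abbrev goldPoly (m : ℕ) : (ZMod m)[X] := X ^ 2 - X - 1

noncomputable abbrev R (m : ℕ) := AdjoinRoot (goldPoly m)

noncomputable abbrev gold (m : ℕ) : R m := AdjoinRoot.root _

noncomputable abbrev g (m : ℕ) : ZMod m →+* R m := algebraMap (ZMod m) (R m)

lemma gold_sq (m : ℕ) : gold m ^ 2 = gold m + 1 := by
  have h := @AdjoinRoot.mk_self _ _ (goldPoly m)
  rw [goldPoly, map_sub, map_sub, map_pow, AdjoinRoot.mk_X, map_one] at h
  linear_combination h

lemma gold_inv (m : ℕ) : gold m * (gold m - 1) = 1 := by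
  linear_combination gold_sq m

lemma coords (m : ℕ) [Fact m.Prime] {a b : ZMod m}
    (h : g m a * gold m + g m b = 0) : a = 0 ∧ b = 0 := by
  have hmk : AdjoinRoot.mk (goldPoly m) (C a * X + C b) = 0 := by
    rw [map_add, map_mul, AdjoinRoot.mk_X, AdjoinRoot.mk_C, AdjoinRoot.mk_C,
      ← AdjoinRoot.algebraMap_eq]
    exact h
  rw [AdjoinRoot.mk_eq_zero] at hmk
  have hg : (C a * X + C b : (ZMod m)[X]) = 0 := by
    by_contra hne
    have hdeg := Polynomial.natDegree_le_of_dvd hmk hne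
    have h2 : (goldPoly m).natDegree = 2 := by
      unfold goldPoly; compute_degree!
    have h1 : (C a * X + C b : (ZMod m)[X]).natDegree ≤ 1 := by
      compute_degree
    omega
  constructor
  · have := congrArg (fun P => Polynomial.coeff P 1) hg
    simpa using this
  · have := congrArg (fun P => Polynomial.coeff P 0) hg
    simpa using this

lemma g_injective (m : ℕ) [Fact m.Prime] :
    Function.Injective (algebraMap (ZMod m) (R m)) := by
  intro a b hab
  have h : g m 0 * gold m + g m (a - b) = 0 := by
    rw [map_sub, hab]; simp
  have h2 := (coords m h).2
  exact sub_eq_zero.mp h2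

lemma gold_pow (m : ℕ) (n : ℕ) :
    gold m ^ (n + 1) = g m (Nat.fib (n + 1) : ZMod m) * gold m + g m (Nat.fib n : ZMod m) := by
  induction n with
  | zero => simp
  | succ n ih =>
    have h2 := gold_sq m
    have h3 : gold m ^ (n + 2) = gold m ^ (n + 1) * gold m := by ring
    rw [h3, ih, Nat.fib_add_two, Nat.cast_add, map_add]
    linear_combination (g m (Nat.fib (n + 1) : ZMod m)) * h2

lemma period_of_pow (m : ℕ) [Fact m.Prime] {k : ℕ} (h : gold m ^ k = 1) :
    ∀ n, Nat.fib (n + k) ≡ Nat.fib n [MOD m] := by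
  intro n
  have h1 : gold m ^ (n + k + 1) = gold m ^ (n + 1) := by
    rw [show n + k + 1 = (n + 1) + k by ring, pow_add, h, mul_one]
  rw [gold_pow, gold_pow] at h1
  have h0 : g m ((Nat.fib (n + k + 1) : ZMod m) - (Nat.fib (n + 1) : ZMod m)) * gold m
      + g m ((Nat.fib (n + k) : ZMod m) - (Nat.fib n : ZMod m)) = 0 := by
    rw [map_sub, map_sub]
    linear_combination h1
  have h2 := (coords m h0).2
  rw [← ZMod.natCast_eq_natCast_iff]
  exact sub_eq_zero.mp h2

lemma pow_of_period (m : ℕ) [Fact m.Prime] {k : ℕ}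
    (h : ∀ n, Nat.fib (n + k) ≡ Nat.fib n [MOD m]) : gold m ^ k = 1 := by
  have h0 : (Nat.fib k : ZMod m) = (Nat.fib 0 : ZMod m) := by
    rw [ZMod.natCast_eq_natCast_iff]; simpa using h 0
  have h1 : (Nat.fib (k + 1) : ZMod m) = (Nat.fib 1 : ZMod m) := by
    rw [ZMod.natCast_eq_natCast_iff]; simpa [Nat.add_comm] using h 1
  have hk1 : gold m ^ (k + 1) = gold m := by
    rw [gold_pow, h0, h1]; simp
  calc gold m ^ k = gold m ^ k * (gold m * (gold m - 1)) := by rw [gold_inv]; ring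
    _ = gold m ^ (k + 1) * (gold m - 1) := by ring
    _ = gold m * (gold m - 1) := by rw [hk1]
    _ = 1 := gold_inv m

lemma pisano_dvd (m : ℕ) [Fact m.Prime] {k : ℕ} (hk : 0 < k) (h : gold m ^ k = 1) :
    pisano m ∣ k := by
  have hne : {k | 0 < k ∧ ∀ n, Nat.fib (n + k) ≡ Nat.fib n [MOD m]}.Nonempty :=
    ⟨k, hk, period_of_pow m h⟩
  have hmem := Nat.sInf_mem hne
  obtain ⟨hπ0, hπper⟩ := hmem
  rw [show sInf {k | 0 < k ∧ ∀ n, Nat.fib (n + k) ≡ Nat.fib n [MOD m]} = pisano m from rfl]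
    at hπ0 hπper
  have hπpow : gold m ^ (pisano m) = 1 := pow_of_period m hπper
  rcases Nat.eq_zero_or_pos (k % pisano m) with h0 | h0
  · exact Nat.dvd_of_mod_eq_zero h0
  · exfalso
    have hmodpow : gold m ^ (k % pisano m) = 1 := by
      have := Nat.div_add_mod k (pisano m)
      calc gold m ^ (k % pisano m)
          = (gold m ^ pisano m) ^ (k / pisano m) * gold m ^ (k % pisano m) := by
            rw [hπpow]; ring
        _ = gold m ^ (pisano m * (k / pisano m) + k % pisano m) := by
            rw [pow_add, pow_mul]
        _ = gold m ^ k := by rw [Nat.div_add_mod]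
        _ = 1 := h
    have hle : pisano m ≤ k % pisano m :=
      Nat.sInf_le ⟨h0, period_of_pow m hmodpow⟩
    have hlt := Nat.mod_lt k hπ0
    omega

lemma euler (m : ℕ) [Fact m.Prime] (hm : 5 < m) :
    2 * gold m ^ m - 1 = (2 * gold m - 1) * g m ((legendreSym m 5 : ℤ) : ZMod m) := by
  haveI : CharP (R m) m := charP_of_injective_algebraMap (g_injective m) m
  have hodd : Odd m := ((Fact.out : m.Prime).odd_of_ne_two (by omega))
  have hmdiv : m = 2 * (m / 2) + 1 := by
    obtain ⟨t, ht⟩ := hodd; omega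
  have hs2 : (2 * gold m - 1) ^ 2 = (5 : R m) := by
    linear_combination (4 : R m) * gold_sq m
  have key : ∀ s : R m, s ^ m = (s ^ 2) ^ (m / 2) * s := by
    intro s
    have h1 : s ^ m = s ^ (2 * (m / 2) + 1) := congrArg (fun k => s ^ k) hmdiv
    rw [h1, pow_succ, pow_mul]
  have hsm : (2 * gold m - 1) ^ m = (2 * gold m - 1) * (5 : R m) ^ (m / 2) := by
    rw [key, hs2]
    ring
  have h5 : (5 : R m) ^ (m / 2) = g m ((legendreSym m 5 : ℤ) : ZMod m) := by
    have he := legendreSym.eq_pow m 5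
    have hgc := congrArg (g m) he
    rw [map_pow] at hgc
    rw [hgc]
    congr 1
    have : ((5 : ℤ) : ZMod m) = (5 : ZMod m) := by push_cast; ring
    rw [this, map_ofNat]
  have hfrob : (2 * gold m - 1) ^ m = 2 * gold m ^ m - 1 := by
    have h1 : (2 * gold m + (-1)) ^ m = (2 * gold m) ^ m + (-1 : R m) ^ m :=
      add_pow_char (2 * gold m) (-1 : R m) m
    have h2 : ((-1 : R m)) ^ m = -1 := hodd.neg_one_pow
    have h3 : (2 : R m) ^ m = 2 := by
      have := ZMod.pow_card (2 : ZMod m)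
      have h4 := congrArg (g m) this
      rw [map_pow, map_ofNat] at h4
      exact h4
    calc (2 * gold m - 1) ^ m = (2 * gold m + (-1)) ^ m := by ring_nf
      _ = (2 * gold m) ^ m + (-1 : R m) ^ m := h1
      _ = (2 : R m) ^ m * gold m ^ m - 1 := by rw [h2, mul_pow]; ring
      _ = 2 * gold m ^ m - 1 := by rw [h3]
  rw [← hfrob, hsm, h5]

lemma two_unit_cancel (m : ℕ) [Fact m.Prime] (hm : 5 < m) {A B : R m}
    (h : 2 * A = 2 * B) : A = B := by
  have h2 : (2 : ZMod m) ≠ 0 := by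
    have h3 : ((2 : ℕ) : ZMod m) ≠ 0 := by
      rw [Ne, ZMod.natCast_eq_zero_iff]
      intro hd
      have := Nat.le_of_dvd (by norm_num) hd
      omega
    simpa using h3
  have hg : g m ((2 : ZMod m)⁻¹) * (2 : R m) = 1 := by
    calc g m ((2 : ZMod m)⁻¹) * (2 : R m) = g m ((2 : ZMod m)⁻¹) * g m (2 : ZMod m) := by
          rw [map_ofNat]
      _ = g m ((2 : ZMod m)⁻¹ * 2) := (map_mul _ _ _).symm
      _ = 1 := by rw [inv_mul_cancel₀ h2, map_one]
  calc A = (g m ((2 : ZMod m)⁻¹) * 2) * A := by rw [hg, one_mul]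
    _ = g m ((2 : ZMod m)⁻¹) * (2 * B) := by rw [← h]; ring
    _ = (g m ((2 : ZMod m)⁻¹) * 2) * B := by ring
    _ = B := by rw [hg, one_mul]

/-- Case `(5/m) = 1`. -/
lemma res_plus (m : ℕ) [Fact m.Prime] (hm : 5 < m) (h : legendreSym m 5 = 1) :
    pisano m ∣ m - 1 ∧ m ∣ Nat.fib (m - 1) := by
  have he := euler m hm
  rw [h] at he
  simp only [Int.cast_one, map_one, mul_one] at he
  have hgm : gold m ^ m = gold m := by
    have h2 : (2 : R m) * gold m ^ m = 2 * gold m := by linear_combination he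
    exact two_unit_cancel m hm h2
  have hpow : gold m ^ (m - 1) = 1 := by
    calc gold m ^ (m - 1) = gold m ^ (m - 1) * (gold m * (gold m - 1)) := by
          rw [gold_inv]; ring
      _ = gold m ^ (m - 1 + 1) * (gold m - 1) := by ring
      _ = gold m ^ m * (gold m - 1) := by congr 2; omega
      _ = gold m * (gold m - 1) := by rw [hgm]
      _ = 1 := gold_inv m
  constructor
  · exact pisano_dvd m (by omega) hpow
  · have hpow2 : gold m ^ ((m - 2) + 1) = 1 := by
      rw [show (m - 2) + 1 = m - 1 by omega]; exact hpow
    rw [gold_pow] at hpow2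
    have h0 : g m ((Nat.fib (m - 2 + 1) : ZMod m) - 0) * gold m
        + g m ((Nat.fib (m - 2) : ZMod m) - 1) = 0 := by
      rw [map_sub, map_sub]
      simp only [map_zero, map_one]
      linear_combination hpow2
    have h1 := (coords m h0).1
    rw [sub_zero] at h1
    rw [← ZMod.natCast_eq_zero_iff, show m - 1 = m - 2 + 1 by omega]
    exact h1

/-- Case `(5/m) = -1`. -/
lemma res_minus (m : ℕ) [Fact m.Prime] (hm : 5 < m) (h : legendreSym m 5 = -1) :
    pisano m ∣ 2 * (m + 1) ∧ m ∣ Nat.fib (m + 1) := by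
  have he := euler m hm
  rw [h] at he
  simp only [Int.cast_neg, Int.cast_one, map_neg, map_one, mul_neg, mul_one] at he
  have hgm : gold m ^ m = 1 - gold m := by
    have h2 : (2 : R m) * gold m ^ m = 2 * (1 - gold m) := by linear_combination he
    exact two_unit_cancel m hm h2
  have hm1 : gold m ^ (m + 1) = -1 := by
    rw [pow_succ, hgm]
    linear_combination - gold_sq m
  have hpow : gold m ^ (2 * (m + 1)) = 1 := by
    rw [show 2 * (m + 1) = (m + 1) * 2 by ring, pow_mul, hm1]
    ring
  constructor
  · exact pisano_dvd m (by omega) hpow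
  · have hid := gold_pow m m
    rw [hm1] at hid
    have h0 : g m ((Nat.fib (m + 1) : ZMod m) - 0) * gold m
        + g m ((Nat.fib m : ZMod m) + 1) = 0 := by
      rw [map_sub, map_add]
      simp only [map_zero, map_one]
      linear_combination - hid
    have h1 := (coords m h0).1
    rw [sub_zero] at h1
    rw [← ZMod.natCast_eq_zero_iff]
    exact h1

end FibGold

lemma fibRank_dvd {p k : ℕ} (hk : 0 < k) (hdvd : p ∣ Nat.fib k) : fibRank p ∣ k := by
  have hne : {j | 0 < j ∧ p ∣ Nat.fib j}.Nonempty := ⟨k, hk, hdvd⟩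
  obtain ⟨hz0, hzf⟩ := Nat.sInf_mem hne
  set z := sInf {j | 0 < j ∧ p ∣ Nat.fib j} with hzdef
  have hgcd : p ∣ Nat.fib (Nat.gcd z k) := by
    rw [Nat.fib_gcd]
    exact Nat.dvd_gcd hzf hdvd
  have hgpos : 0 < Nat.gcd z k := Nat.gcd_pos_of_pos_left k hz0
  have hle : z ≤ Nat.gcd z k := Nat.sInf_le ⟨hgpos, hgcd⟩
  have hge : Nat.gcd z k ≤ z := Nat.le_of_dvd hz0 (Nat.gcd_dvd_left z k)
  have heq : Nat.gcd z k = z := le_antisymm hge hle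
  have : z ∣ k := heq ▸ Nat.gcd_dvd_right z k
  exact this

theorem legendre_five_neg_one_at_q (q p : ℕ) [Fact q.Prime] [Fact p.Prime]
    (hq5 : 5 < q) (hp : p = 2 * q + 1) (hz : fibRank p ∣ pisano q) :
    legendreSym q 5 = -1 ∧ pisano q ∣ 2 * (q + 1) := by
  have hq7 : 7 ≤ q := by
    have hqp : q.Prime := Fact.out
    rcases Nat.lt_or_ge q 7 with h | h
    · exfalso
      have h6 : q = 6 := by omega
      rw [h6] at hqp
      norm_num at hqp
    · exact h
  have hp15 : 15 ≤ p := by omega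
  have h5p : ((5 : ℤ) : ZMod p) ≠ 0 := by
    rw [Ne, ZMod.intCast_zmod_eq_zero_iff_dvd]
    intro hd
    have := Int.le_of_dvd (by norm_num) hd
    omega
  have h5q : ((5 : ℤ) : ZMod q) ≠ 0 := by
    rw [Ne, ZMod.intCast_zmod_eq_zero_iff_dvd]
    intro hd
    have := Int.le_of_dvd (by norm_num) hd
    omega
  have hεp := legendreSym.eq_one_or_neg_one (p := p) h5p
  -- fibRank p divides p - 1 or p + 1, and p ∣ fib (fibRank p), fibRank p ≥ 5
  have hzS : 0 < fibRank p ∧ p ∣ Nat.fib (fibRank p) := by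
    have hne : {j | 0 < j ∧ p ∣ Nat.fib j}.Nonempty := by
      rcases hεp with h1 | h1
      · exact ⟨p - 1, by omega, (FibGold.res_plus p (by omega) h1).2⟩
      · exact ⟨p + 1, by omega, (FibGold.res_minus p (by omega) h1).2⟩
    exact Nat.sInf_mem hne
  obtain ⟨hz0, hzfib⟩ := hzS
  have hz5 : 5 ≤ fibRank p := by
    by_contra hlt
    have h4 : fibRank p ≤ 4 := by omega
    have hfle : Nat.fib (fibRank p) ≤ Nat.fib 4 := Nat.fib_mono h4
    have hf4 : Nat.fib 4 = 3 := by decide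
    have hfpos : 0 < Nat.fib (fibRank p) := Nat.fib_pos.mpr hz0
    have := Nat.le_of_dvd hfpos hzfib
    omega
  have hqneg : legendreSym q 5 = -1 := by
    rcases legendreSym.eq_one_or_neg_one (p := q) h5q with h1 | h1
    · exfalso
      have hπ : pisano q ∣ q - 1 := (FibGold.res_plus q hq5 h1).1
      have hzq : fibRank p ∣ q - 1 := dvd_trans hz hπ
      have hzq2 : fibRank p ∣ 2 * (q - 1) := Dvd.dvd.mul_left hzq 2
      rcases hεp with h2 | h2
      · have hzp : fibRank p ∣ p - 1 :=
          fibRank_dvd (by omega) (FibGold.res_plus p (by omega) h2).2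
        have : fibRank p ∣ 2 := by
          have := Nat.dvd_sub hzp hzq2
          rwa [show p - 1 - 2 * (q - 1) = 2 by omega] at this
        have := Nat.le_of_dvd (by norm_num) this
        omega
      · have hzp : fibRank p ∣ p + 1 :=
          fibRank_dvd (by omega) (FibGold.res_minus p (by omega) h2).2
        have : fibRank p ∣ 4 := by
          have := Nat.dvd_sub hzp hzq2
          rwa [show p + 1 - 2 * (q - 1) = 4 by omega] at this
        have := Nat.le_of_dvd (by norm_num) this
        omega
    · exact h1
  exact ⟨hqneg, (FibGold.res_minus q hq5 hqneg).1⟩
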